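/- arXiv:2207.12802 — 6 statements merged into one kernel-verified Lean document; each statement's English description precedes it below -/
import Mathlib

section
/- Let the EKI update be u_{n+1}^{(j)} = u_n^{(j)} + C_n^{up}(C_n^{pp} + Γ)^{-1}(y_n^{(j)} - G(u_n^{(j)})), where C_n^{up} = (1/(J-1)) Σ_k (u_n^{(k)} - ū_n)(G(u_n^{(k)}) - Ḡ_n)^T. Then for all n ∈ ℕ and all j, the particle u_n^{(j)} lies in the linear span A of the initial ensemble {u_0^{(1)}, ..., u_0^{(J)}} (the subspace property). -/
open Matrix Finset

lemma vecMulVec_mulVec' {d m : ℕ} (a : Fin d → ℝ) (b v : Fin m → ℝ) :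
    (Matrix.vecMulVec a b).mulVec v = (b ⬝ᵥ v) • a := by
  ext i
  simp [Matrix.mulVec, Matrix.vecMulVec_apply, dotProduct, Finset.mul_sum, mul_assoc,
    mul_comm, mul_left_comm]

lemma sum_mulVec' {d m J : ℕ} (M : Fin J → Matrix (Fin d) (Fin m) ℝ) (v : Fin m → ℝ) :
    (∑ k, M k).mulVec v = ∑ k, (M k).mulVec v := by
  ext i
  simp only [Matrix.mulVec, dotProduct, Finset.sum_apply, Matrix.sum_apply, Finset.sum_mul]
  rw [Finset.sum_comm]

/-- Subspace property of ensemble Kalman inversion: every particle produced by the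
EKI update remains in the linear span of the initial ensemble. -/
theorem eki_subspace_property
    (d m J : ℕ)
    (G : (Fin d → ℝ) → (Fin m → ℝ))
    (Γ : Matrix (Fin m) (Fin m) ℝ)
    (u : ℕ → Fin J → (Fin d → ℝ))
    (y : ℕ → Fin J → (Fin m → ℝ))
    (ubar : ℕ → Fin d → ℝ)
    (Gbar : ℕ → Fin m → ℝ)
    (hubar : ∀ n, ubar n = (J : ℝ)⁻¹ • ∑ k, u n k)
    (hGbar : ∀ n, Gbar n = (J : ℝ)⁻¹ • ∑ k, G (u n k))
    (Cup : ℕ → Matrix (Fin d) (Fin m) ℝ)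
    (hCup : ∀ n, Cup n =
      ((J : ℝ) - 1)⁻¹ • ∑ k, Matrix.vecMulVec (u n k - ubar n) (G (u n k) - Gbar n))
    (Cpp : ℕ → Matrix (Fin m) (Fin m) ℝ)
    (hupdate : ∀ n j, u (n + 1) j =
      u n j + (Cup n).mulVec (((Cpp n + Γ)⁻¹).mulVec (y n j - G (u n j)))) :
    ∀ n j, u n j ∈ Submodule.span ℝ (Set.range (u 0)) := by
  intro n
  induction n with
  | zero => intro j; exact Submodule.subset_span ⟨j, rfl⟩
  | succ n ih =>
    intro j
    have hbar : ubar n ∈ Submodule.span ℝ (Set.range (u 0)) := by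
      rw [hubar n]
      exact Submodule.smul_mem _ _ (Submodule.sum_mem _ fun k _ => ih k)
    rw [hupdate n j, hCup n]
    refine Submodule.add_mem _ (ih j) ?_
    rw [Matrix.smul_mulVec, sum_mulVec']
    refine Submodule.smul_mem _ _ (Submodule.sum_mem _ fun k _ => ?_)
    rw [vecMulVec_mulVec']
    exact Submodule.smul_mem _ _ (Submodule.sub_mem _ (ih k) hbar)
end

section
/- For the linear noise-free continuous-time EKI, the flow du^{(j)}/dt = (1/J) Σ_{k=1}^J ⟨A(u^{(k)} - ū), y - Au^{(j)}⟩_Γ (u^{(k)} - ū) can be written as the preconditioned gradient flow du^{(j)}/dt = -(J-1)/J · C(u) ∇_u Φ(u^{(j)}; y), where Φ(u;y) = (1/2)‖Γ^{-1/2}(y - Au)‖² and C(u) is the empirical covariance (up to the stated constant). -/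
open Matrix Finset

/-- The linear noise-free continuous-time EKI drift equals the preconditioned
gradient `-(J-1)/J · C(u) ∇Φ(u⁽ʲ⁾; y)` of the least-squares misfit. -/
theorem eki_drift_is_preconditioned_gradient
    (d m J : ℕ) (hJ : 2 ≤ J)
    (A : Matrix (Fin m) (Fin d) ℝ)
    (Γ : Matrix (Fin m) (Fin m) ℝ) (hΓ : Γ.PosDef)
    (y : Fin m → ℝ)
    (u : Fin J → (Fin d → ℝ))
    (ubar : Fin d → ℝ)
    (hubar : ubar = (J : ℝ)⁻¹ • ∑ k, u k)
    (C : Matrix (Fin d) (Fin d) ℝ)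
    (hC : C = ((J : ℝ) - 1)⁻¹ • ∑ k, Matrix.vecMulVec (u k - ubar) (u k - ubar))
    (gradΦ : (Fin d → ℝ) → (Fin d → ℝ))
    (hgrad : ∀ v, gradΦ v = Aᵀ.mulVec (Γ⁻¹.mulVec (A.mulVec v - y))) :
    ∀ j : Fin J,
      (J : ℝ)⁻¹ • ∑ k, (Γ⁻¹.mulVec (A.mulVec (u k - ubar)) ⬝ᵥ (y - A.mulVec (u j)))
          • (u k - ubar)
        = -(((J : ℝ) - 1) / (J : ℝ)) • C.mulVec (gradΦ (u j)) := by
  intro j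
  have hJ1 : ((J : ℝ) - 1) ≠ 0 := by
    have : (2:ℝ) ≤ (J:ℝ) := by exact_mod_cast hJ
    linarith
  have hΓsymm : Γ⁻¹ᵀ = Γ⁻¹ := by
    rw [Matrix.transpose_nonsing_inv]
    congr 1
    ext i j
    simpa using (hΓ.isHermitian.apply j i).symm
  -- coefficient identity
  have hcoef : ∀ k, (Γ⁻¹.mulVec (A.mulVec (u k - ubar)) ⬝ᵥ (y - A.mulVec (u j)))
      = -((u k - ubar) ⬝ᵥ (Aᵀ.mulVec (Γ⁻¹.mulVec (A.mulVec (u j) - y)))) := by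
    intro k
    rw [Matrix.dotProduct_mulVec, Matrix.vecMul_transpose,
      show (y - A.mulVec (u j)) = -(A.mulVec (u j) - y) by ring_nf]
    rw [dotProduct_neg, Matrix.dotProduct_mulVec, ← Matrix.mulVec_transpose, hΓsymm]
  simp only [hcoef, hC, hgrad]
  rw [Matrix.smul_mulVec]
  set w := Aᵀ.mulVec (Γ⁻¹.mulVec (A.mulVec (u j) - y)) with hw
  have hsum : (∑ k, Matrix.vecMulVec (u k - ubar) (u k - ubar)).mulVec w
      = ∑ k, (Matrix.vecMulVec (u k - ubar) (u k - ubar)).mulVec w := by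
    ext i
    simp only [Matrix.mulVec, dotProduct, Matrix.sum_apply, Finset.sum_apply,
      Finset.sum_mul]
    rw [Finset.sum_comm]
  rw [hsum]
  have : ∀ k, (Matrix.vecMulVec (u k - ubar) (u k - ubar)).mulVec
      w = ((u k - ubar) ⬝ᵥ w) • (u k - ubar) := by
    intro k
    ext i
    simp only [Matrix.vecMulVec, Matrix.mulVec, dotProduct, Matrix.of_apply,
      Pi.smul_apply, smul_eq_mul, Finset.sum_mul]
    exact Finset.sum_congr rfl fun x _ => by ring
  simp only [this]
  have hX : ∀ X : Fin d → ℝ,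
      (-(((J : ℝ) - 1) / (J : ℝ))) • (((J : ℝ) - 1)⁻¹ • X) = (-(J : ℝ)⁻¹) • X := by
    intro X
    rw [smul_smul]
    congr 1
    field_simp
  rw [hX]
  simp only [neg_smul, Finset.sum_neg_distrib, smul_neg]
end

section
/- In the large-ensemble linear Gaussian limit, the EKI estimate converges to the Tikhonov update: if u^{(j)}_0 are i.i.d. samples from N(m̄, C), then as J → ∞ the one-step EKI mean ū + C^{up}(C^{pp} + Γ)^{-1}(y - Ḡ) converges almost surely to m̄ + CG^T(GCG^T + Γ)^{-1}(y - Gm̄). -/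
open Matrix Finset MeasureTheory ProbabilityTheory Filter Topology

private lemma eki_tendsto_ratio : Tendsto (fun J : ℕ => (J:ℝ)/((J:ℝ)-1)) atTop (𝓝 1) := by
  have h0 : Tendsto (fun J : ℕ => ((J:ℝ)-1)) atTop atTop :=
    (tendsto_natCast_atTop_atTop (R := ℝ)).atTop_add tendsto_const_nhds
  have h1 : Tendsto (fun J : ℕ => 1 + ((J:ℝ)-1)⁻¹) atTop (𝓝 1) := by
    simpa using tendsto_const_nhds.add h0.inv_tendsto_atTop
  refine h1.congr' ?_
  filter_upwards [eventually_ge_atTop 2] with J hJ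
  have : (J:ℝ) - 1 ≠ 0 := by
    have : (2:ℝ) ≤ J := by exact_mod_cast hJ
    linarith
  field_simp
  ring

private lemma eki_vecMulVec_right {d k : ℕ} (G : Matrix (Fin k) (Fin d) ℝ)
    (v : Fin d → ℝ) (w : Fin d → ℝ) :
    vecMulVec v (G.mulVec w) = vecMulVec v w * Gᵀ := by
  rw [vecMulVec_eq Unit, vecMulVec_eq Unit, replicateRow_mulVec, transpose_mul, transpose_replicateCol,
    Matrix.mul_assoc]

private lemma eki_vecMulVec_both {d k : ℕ} (G : Matrix (Fin k) (Fin d) ℝ)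
    (v w : Fin d → ℝ) :
    vecMulVec (G.mulVec v) (G.mulVec w) = G * vecMulVec v w * Gᵀ := by
  rw [vecMulVec_eq Unit, vecMulVec_eq Unit, replicateRow_mulVec, replicateCol_mulVec, transpose_mul, transpose_replicateCol]
  simp only [Matrix.mul_assoc]

set_option maxHeartbeats 1000000 in
private lemma eki_contAt (d m : ℕ) (G : Matrix (Fin m) (Fin d) ℝ)
    (Γ : Matrix (Fin m) (Fin m) ℝ) (hΓ : Γ.PosDef)
    (C : Matrix (Fin d) (Fin d) ℝ) (hC : C.PosSemidef)
    (mbar : Fin d → ℝ) (y : Fin m → ℝ) :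
    ContinuousAt (fun p : (Fin d → ℝ) × Matrix (Fin d) (Fin d) ℝ =>
      p.1 + (p.2 * Gᵀ).mulVec ((G * p.2 * Gᵀ + Γ)⁻¹.mulVec (y - G.mulVec p.1)))
      (mbar, C) := by
  have hpd : (G * C * Gᵀ + Γ).PosDef := by
    have h1 : (G * C * Gᵀ).PosSemidef := by
      simpa using hC.mul_mul_conjTranspose_same G
    exact Matrix.PosDef.posSemidef_add h1 hΓ
  have hdet : (G * C * Gᵀ + Γ).det ≠ 0 := hpd.det_pos.ne'
  have hR : ContinuousAt (Ring.inverse : ℝ → ℝ) (G * C * Gᵀ + Γ).det := by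
    rw [Ring.inverse_eq_inv']
    exact continuousAt_inv₀ hdet
  have hM : Continuous (fun p : (Fin d → ℝ) × Matrix (Fin d) (Fin d) ℝ =>
      G * p.2 * Gᵀ + Γ) :=
    ((continuous_const.matrix_mul continuous_snd).matrix_mul continuous_const).add
      continuous_const
  have hinv : ContinuousAt (fun p : (Fin d → ℝ) × Matrix (Fin d) (Fin d) ℝ =>
      (G * p.2 * Gᵀ + Γ)⁻¹) (mbar, C) :=
    ContinuousAt.comp (g := (Inv.inv : Matrix (Fin m) (Fin m) ℝ → _))
      (continuousAt_matrix_inv _ hR) hM.continuousAt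
  have hrhs : Continuous (fun p : (Fin d → ℝ) × Matrix (Fin d) (Fin d) ℝ =>
      y - G.mulVec p.1) :=
    continuous_const.sub (continuous_const.matrix_mulVec continuous_fst)
  have hbil : Continuous (fun q : Matrix (Fin m) (Fin m) ℝ × (Fin m → ℝ) =>
      q.1.mulVec q.2) := continuous_fst.matrix_mulVec continuous_snd
  have h2 : ContinuousAt (fun p : (Fin d → ℝ) × Matrix (Fin d) (Fin d) ℝ =>
      (G * p.2 * Gᵀ + Γ)⁻¹.mulVec (y - G.mulVec p.1)) (mbar, C) :=
    hbil.continuousAt.comp (hinv.prodMk hrhs.continuousAt)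
  have hbil2 : Continuous (fun q : Matrix (Fin d) (Fin m) ℝ × (Fin m → ℝ) =>
      q.1.mulVec q.2) := continuous_fst.matrix_mulVec continuous_snd
  have h3 : ContinuousAt (fun p : (Fin d → ℝ) × Matrix (Fin d) (Fin d) ℝ =>
      (p.2 * Gᵀ).mulVec ((G * p.2 * Gᵀ + Γ)⁻¹.mulVec (y - G.mulVec p.1))) (mbar, C) :=
    hbil2.continuousAt.comp
      (((continuous_snd.matrix_mul continuous_const).continuousAt).prodMk h2)
  exact continuous_fst.continuousAt.add h3

private lemma eki_slln
    (d : ℕ)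
    (Ω : Type*) [MeasureSpace Ω] (μ : Measure Ω) [IsProbabilityMeasure μ]
    (u : ℕ → Ω → (Fin d → ℝ))
    (hmeas : ∀ j, Measurable (u j))
    (hindep : iIndepFun u μ)
    (ν : Measure (Fin d → ℝ)) [IsProbabilityMeasure ν]
    (hdist : ∀ j, Measure.map (u j) μ = ν)
    (φ : (Fin d → ℝ) → ℝ) (hφ : Measurable φ) (hi : Integrable φ ν) :
    ∀ᵐ ω ∂μ, Tendsto (fun J : ℕ => (∑ j ∈ range J, φ (u j ω)) / J) atTop
      (𝓝 (∫ x, φ x ∂ν)) := by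
  have hint : Integrable (fun ω => φ (u 0 ω)) μ := by
    rw [← hdist 0] at hi
    exact (integrable_map_measure hφ.aestronglyMeasurable (hmeas 0).aemeasurable).mp hi
  have hpair : Pairwise (Function.onFun (IndepFun · · μ) fun j ω => φ (u j ω)) := by
    intro i j hij
    exact (hindep.indepFun hij).comp hφ hφ
  have hident : ∀ i, IdentDistrib (fun ω => φ (u i ω)) (fun ω => φ (u 0 ω)) μ μ := by
    intro i
    have : IdentDistrib (u i) (u 0) μ μ :=
      ⟨(hmeas i).aemeasurable, (hmeas 0).aemeasurable, (hdist i).trans (hdist 0).symm⟩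
    exact this.comp hφ
  have h := strong_law_ae_real (fun j ω => φ (u j ω)) hint hpair hident
  have heq : (∫ ω, φ (u 0 ω) ∂μ) = ∫ x, φ x ∂ν := by
    rw [← hdist 0, integral_map (hmeas 0).aemeasurable hφ.aestronglyMeasurable]
  rwa [heq] at h

private lemma eki_det (d m : ℕ) (G : Matrix (Fin m) (Fin d) ℝ)
    (Γ : Matrix (Fin m) (Fin m) ℝ) (hΓ : Γ.PosDef)
    (C : Matrix (Fin d) (Fin d) ℝ) (hC : C.PosSemidef)
    (mbar : Fin d → ℝ) (y : Fin m → ℝ)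
    (w : ℕ → Fin d → ℝ)
    (hA : ∀ a, Tendsto (fun J : ℕ => (∑ j ∈ range J, w j a) / J) atTop (𝓝 (mbar a)))
    (hB : ∀ a b, Tendsto (fun J : ℕ => (∑ j ∈ range J, w j a * w j b) / J) atTop
      (𝓝 (C a b + mbar a * mbar b))) :
    Tendsto
      (fun J : ℕ =>
        letI ub : Fin d → ℝ := (J : ℝ)⁻¹ • ∑ j ∈ Finset.range J, w j
        letI Gb : Fin m → ℝ := (J : ℝ)⁻¹ • ∑ j ∈ Finset.range J, G.mulVec (w j)
        letI Cup : Matrix (Fin d) (Fin m) ℝ :=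
          ((J : ℝ) - 1)⁻¹ • ∑ j ∈ Finset.range J,
            Matrix.vecMulVec (w j - ub) (G.mulVec (w j) - Gb)
        letI Cpp : Matrix (Fin m) (Fin m) ℝ :=
          ((J : ℝ) - 1)⁻¹ • ∑ j ∈ Finset.range J,
            Matrix.vecMulVec (G.mulVec (w j) - Gb) (G.mulVec (w j) - Gb)
        ub + Cup.mulVec ((Cpp + Γ)⁻¹.mulVec (y - Gb)))
      atTop
      (nhds (mbar + (C * Gᵀ).mulVec ((G * C * Gᵀ + Γ)⁻¹.mulVec (y - G.mulVec mbar)))) := by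
  set v : ℕ → Fin d → ℝ := fun J => (J : ℝ)⁻¹ • ∑ j ∈ range J, w j with hv_def
  set S : ℕ → Matrix (Fin d) (Fin d) ℝ := fun J =>
    ((J : ℝ) - 1)⁻¹ • ∑ j ∈ range J, vecMulVec (w j - v J) (w j - v J) with hS_def
  -- rewrite the prelimit expression in terms of `v` and `S`
  have hGb : ∀ J : ℕ, (J : ℝ)⁻¹ • ∑ j ∈ range J, G.mulVec (w j) = G.mulVec (v J) := by
    intro J
    rw [hv_def]
    simp only
    rw [Matrix.mulVec_smul]
    congr 1
    have h := map_sum G.mulVecLin (fun j => w j) (range J)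
    simp only [Matrix.mulVecLin_apply] at h
    exact h.symm
  have hfun : (fun J : ℕ =>
        letI ub : Fin d → ℝ := (J : ℝ)⁻¹ • ∑ j ∈ Finset.range J, w j
        letI Gb : Fin m → ℝ := (J : ℝ)⁻¹ • ∑ j ∈ Finset.range J, G.mulVec (w j)
        letI Cup : Matrix (Fin d) (Fin m) ℝ :=
          ((J : ℝ) - 1)⁻¹ • ∑ j ∈ Finset.range J,
            Matrix.vecMulVec (w j - ub) (G.mulVec (w j) - Gb)
        letI Cpp : Matrix (Fin m) (Fin m) ℝ :=
          ((J : ℝ) - 1)⁻¹ • ∑ j ∈ Finset.range J,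
            Matrix.vecMulVec (G.mulVec (w j) - Gb) (G.mulVec (w j) - Gb)
        ub + Cup.mulVec ((Cpp + Γ)⁻¹.mulVec (y - Gb)))
      = fun J : ℕ =>
        v J + (S J * Gᵀ).mulVec ((G * S J * Gᵀ + Γ)⁻¹.mulVec (y - G.mulVec (v J))) := by
    funext J
    show v J + _ = _
    rw [hGb J]
    have hterm : ∀ j : ℕ, G.mulVec (w j) - G.mulVec (v J) = G.mulVec (w j - v J) :=
      fun j => (Matrix.mulVec_sub G _ _).symm
    have hCup : (((J : ℝ) - 1)⁻¹ • ∑ j ∈ range J,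
        vecMulVec (w j - v J) (G.mulVec (w j) - G.mulVec (v J))) = S J * Gᵀ := by
      rw [hS_def]
      simp only
      calc ((J : ℝ) - 1)⁻¹ • ∑ j ∈ range J,
            vecMulVec (w j - v J) (G.mulVec (w j) - G.mulVec (v J))
          = ((J : ℝ) - 1)⁻¹ • ∑ j ∈ range J,
            vecMulVec (w j - v J) (w j - v J) * Gᵀ := by
            congr 1
            exact Finset.sum_congr rfl fun j _ => by rw [hterm j, eki_vecMulVec_right]
        _ = ((J : ℝ) - 1)⁻¹ • ((∑ j ∈ range J, vecMulVec (w j - v J) (w j - v J)) * Gᵀ) := by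
            rw [Matrix.sum_mul]
        _ = (((J : ℝ) - 1)⁻¹ • ∑ j ∈ range J, vecMulVec (w j - v J) (w j - v J)) * Gᵀ := by
            rw [Matrix.smul_mul]
    have hCpp : (((J : ℝ) - 1)⁻¹ • ∑ j ∈ range J,
        vecMulVec (G.mulVec (w j) - G.mulVec (v J)) (G.mulVec (w j) - G.mulVec (v J)))
        = G * S J * Gᵀ := by
      rw [hS_def]
      simp only
      calc ((J : ℝ) - 1)⁻¹ • ∑ j ∈ range J,
            vecMulVec (G.mulVec (w j) - G.mulVec (v J)) (G.mulVec (w j) - G.mulVec (v J))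
          = ((J : ℝ) - 1)⁻¹ • ∑ j ∈ range J,
            G * vecMulVec (w j - v J) (w j - v J) * Gᵀ := by
            congr 1
            exact Finset.sum_congr rfl fun j _ => by rw [hterm j, eki_vecMulVec_both]
        _ = ((J : ℝ) - 1)⁻¹ •
            (G * (∑ j ∈ range J, vecMulVec (w j - v J) (w j - v J)) * Gᵀ) := by
            rw [Matrix.mul_sum, Matrix.sum_mul]
        _ = G * (((J : ℝ) - 1)⁻¹ • ∑ j ∈ range J, vecMulVec (w j - v J) (w j - v J)) * Gᵀ := by
            rw [Matrix.mul_smul, Matrix.smul_mul]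
    rw [hCup, hCpp]
  rw [hfun]
  -- convergence of `v`
  have hv : Tendsto v atTop (𝓝 mbar) := by
    rw [tendsto_pi_nhds]
    intro a
    have := hA a
    refine this.congr ?_
    intro J
    simp [hv_def, Finset.sum_apply, div_eq_inv_mul]
  have hva : ∀ a, Tendsto (fun J => v J a) atTop (𝓝 (mbar a)) := by
    intro a
    exact (tendsto_pi_nhds.mp hv) a
  -- convergence of `S`
  have hS : Tendsto S atTop (𝓝 C) := by
    refine tendsto_pi_nhds.2 ?_
    intro a
    rw [tendsto_pi_nhds]
    intro b
    have hg : Tendsto (fun J : ℕ => ((J:ℝ)/((J:ℝ)-1)) *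
        ((∑ j ∈ range J, w j a * w j b) / J - v J a * v J b)) atTop
        (𝓝 (1 * ((C a b + mbar a * mbar b) - mbar a * mbar b))) :=
      eki_tendsto_ratio.mul ((hB a b).sub ((hva a).mul (hva b)))
    have hlim : (1 : ℝ) * ((C a b + mbar a * mbar b) - mbar a * mbar b) = C a b := by ring
    rw [hlim] at hg
    refine hg.congr' ?_
    filter_upwards [eventually_ge_atTop 1] with J hJ
    have hJ0 : (J:ℝ) ≠ 0 := by
      have : (1:ℝ) ≤ J := by exact_mod_cast hJ
      linarith
    have hsa : ∑ j ∈ range J, w j a = (J:ℝ) * v J a := by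
      simp only [hv_def, Pi.smul_apply, Finset.sum_apply, smul_eq_mul]
      field_simp
    have hsb : ∑ j ∈ range J, w j b = (J:ℝ) * v J b := by
      simp only [hv_def, Pi.smul_apply, Finset.sum_apply, smul_eq_mul]
      field_simp
    have expand : (∑ j ∈ range J, (w j a - v J a) * (w j b - v J b))
        = (∑ j ∈ range J, w j a * w j b) - (J:ℝ) * (v J a * v J b) := by
      have e : ∀ j : ℕ, (w j a - v J a) * (w j b - v J b)
          = w j a * w j b - v J b * w j a - v J a * w j b + v J a * v J b := by
        intro j; ring
      rw [Finset.sum_congr rfl (fun j _ => e j)]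
      simp only [Finset.sum_add_distrib, Finset.sum_sub_distrib, ← Finset.mul_sum,
        Finset.sum_const, Finset.card_range, nsmul_eq_mul]
      rw [hsa, hsb]
      ring
    have hSab : S J a b = ((J:ℝ)-1)⁻¹ *
        ((∑ j ∈ range J, w j a * w j b) - (J:ℝ) * (v J a * v J b)) := by
      simp only [hS_def, Matrix.smul_apply, Matrix.sum_apply, vecMulVec_apply,
        Pi.sub_apply, smul_eq_mul]
      rw [← expand]
    rw [hSab]
    have hkey : (J:ℝ) * ((∑ j ∈ range J, w j a * w j b) / (J:ℝ) - v J a * v J b)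
        = (∑ j ∈ range J, w j a * w j b) - (J:ℝ) * (v J a * v J b) := by
      field_simp
    rw [div_mul_eq_mul_div, hkey, div_eq_inv_mul]
  -- conclude by continuity
  have hcont := eki_contAt d m G Γ hΓ C hC mbar y
  have hpair : Tendsto (fun J : ℕ => (v J, S J)) atTop (𝓝 (mbar, C)) :=
    hv.prodMk_nhds hS
  exact hcont.tendsto.comp hpair


/-- Large-ensemble limit of linear EKI: for i.i.d. samples with mean `m̄` and
covariance `C` (e.g. Gaussian `N(m̄,C)` samples), the one-step EKI mean
`ū + C^{up}(C^{pp} + Γ)⁻¹(y - Ḡ)` converges almost surely, as `J → ∞`, to the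
Tikhonov/Kalman update `m̄ + CGᵀ(GCGᵀ + Γ)⁻¹(y - Gm̄)`. -/
theorem eki_large_ensemble_limit
    (d m : ℕ)
    (G : Matrix (Fin m) (Fin d) ℝ)
    (Γ : Matrix (Fin m) (Fin m) ℝ) (hΓ : Γ.PosDef)
    (C : Matrix (Fin d) (Fin d) ℝ) (hC : C.PosSemidef)
    (mbar : Fin d → ℝ) (y : Fin m → ℝ)
    (Ω : Type*) [MeasureSpace Ω] (μ : Measure Ω) [IsProbabilityMeasure μ]
    (u : ℕ → Ω → (Fin d → ℝ))
    (hmeas : ∀ j, Measurable (u j))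
    -- the particles are independent
    (hindep : iIndepFun u μ)
    -- each particle is distributed according to a common law `ν`
    (ν : Measure (Fin d → ℝ)) [IsProbabilityMeasure ν]
    (hdist : ∀ j, Measure.map (u j) μ = ν)
    -- `ν` (e.g. the Gaussian `N(m̄, C)`) has mean `m̄`, covariance `C`,
    -- and integrable second moments
    (hmom1 : ∀ a, Integrable (fun x => x a) ν)
    (hmom2 : ∀ a b, Integrable (fun x => x a * x b) ν)
    (hmean : ∀ a, (∫ x, x a ∂ν) = mbar a)
    (hcov : ∀ a b, (∫ x, (x a - mbar a) * (x b - mbar b) ∂ν) = C a b)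
    :
    ∀ᵐ ω ∂μ, Tendsto
      (fun J : ℕ =>
        letI ub : Fin d → ℝ := (J : ℝ)⁻¹ • ∑ j ∈ Finset.range J, u j ω
        letI Gb : Fin m → ℝ := (J : ℝ)⁻¹ • ∑ j ∈ Finset.range J, G.mulVec (u j ω)
        letI Cup : Matrix (Fin d) (Fin m) ℝ :=
          ((J : ℝ) - 1)⁻¹ • ∑ j ∈ Finset.range J,
            Matrix.vecMulVec (u j ω - ub) (G.mulVec (u j ω) - Gb)
        letI Cpp : Matrix (Fin m) (Fin m) ℝ :=
          ((J : ℝ) - 1)⁻¹ • ∑ j ∈ Finset.range J,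
            Matrix.vecMulVec (G.mulVec (u j ω) - Gb) (G.mulVec (u j ω) - Gb)
        ub + Cup.mulVec ((Cpp + Γ)⁻¹.mulVec (y - Gb)))
      atTop
      (nhds (mbar + (C * Gᵀ).mulVec ((G * C * Gᵀ + Γ)⁻¹.mulVec (y - G.mulVec mbar)))) := by
  -- second moments of ν
  have hsecond : ∀ a b, (∫ x, x a * x b ∂ν) = C a b + mbar a * mbar b := by
    intro a b
    have i1 : Integrable (fun x : Fin d → ℝ => mbar b * x a) ν := (hmom1 a).const_mul _
    have i2 : Integrable (fun x : Fin d → ℝ => mbar a * x b) ν := (hmom1 b).const_mul _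
    have i12 : Integrable (fun x : Fin d → ℝ => mbar b * x a + mbar a * x b) ν := i1.add i2
    have hint2 : Integrable
        (fun x : Fin d → ℝ => mbar b * x a + mbar a * x b - mbar a * mbar b) ν :=
      i12.sub (integrable_const _)
    have he : (fun x : Fin d → ℝ => (x a - mbar a) * (x b - mbar b))
        = fun x => x a * x b - (mbar b * x a + mbar a * x b - mbar a * mbar b) := by
      funext x; ring
    have h1 := hcov a b
    rw [he, integral_sub (hmom2 a b) hint2] at h1
    have h2 : (∫ x, (mbar b * x a + mbar a * x b - mbar a * mbar b) ∂ν)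
        = mbar a * mbar b := by
      rw [integral_sub i12 (integrable_const _), integral_add i1 i2, integral_const_mul,
        integral_const_mul, hmean a, hmean b]
      simp [measure_univ]
      ring
    rw [h2] at h1
    linarith
  -- strong law for first and second moments
  have hA : ∀ᵐ ω ∂μ, ∀ a, Tendsto (fun J : ℕ => (∑ j ∈ range J, u j ω a) / J) atTop
      (𝓝 (mbar a)) := by
    rw [ae_all_iff]
    intro a
    have := eki_slln d Ω μ u hmeas hindep ν hdist (fun x => x a)
      (measurable_pi_apply a) (hmom1 a)
    rwa [hmean a] at this
  have hB : ∀ᵐ ω ∂μ, ∀ a b, Tendsto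
      (fun J : ℕ => (∑ j ∈ range J, u j ω a * u j ω b) / J) atTop
      (𝓝 (C a b + mbar a * mbar b)) := by
    rw [ae_all_iff]
    intro a
    rw [ae_all_iff]
    intro b
    have := eki_slln d Ω μ u hmeas hindep ν hdist (fun x => x a * x b)
      ((measurable_pi_apply a).mul (measurable_pi_apply b)) (hmom2 a b)
    rwa [hsecond a b] at this
  filter_upwards [hA, hB] with ω h1 h2
  exact eki_det d m G Γ hΓ C hC mbar y (fun j => u j ω) h1 h2
end

section
/- For the linear deterministic continuous-time EKI flow, the span of the centered ensemble is invariant: if at time 0 all particles lie in the affine subspace ū(0) + V where V = span{u^{(k)}(0) - ū(0)}, then u^{(j)}(t) ∈ u^{(j)}(0) + V for all t ≥ 0 and all j (each particle's velocity lies in V). -/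
open Matrix Finset

lemma eki_aux_key {ι : Type*} [Fintype ι] {E : Type*} [AddCommGroup E] [Module ℝ E]
    (a : ι → ι → ℝ) (v : ι → E) (r : ℝ) (j : ι) :
    r • ∑ k, a j k • v k - r • ∑ l, (r • ∑ k, a l k • v k)
      = ∑ k, (r * a j k - r * (r * ∑ l, a l k)) • v k := by
  simp only [sub_smul, Finset.sum_sub_distrib, Finset.smul_sum, smul_smul]
  congr 1
  rw [Finset.sum_comm]
  refine Finset.sum_congr rfl fun k _ => ?_
  rw [← Finset.sum_smul]
  congr 1
  rw [Finset.mul_sum, Finset.mul_sum]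

/-- Invariance of the ensemble span for linear deterministic continuous-time EKI:
each particle stays in the affine subspace through its initial position directed by
the span `V` of the initial centered ensemble. -/
theorem eki_flow_span_invariance
    (d m J : ℕ)
    (A : Matrix (Fin m) (Fin d) ℝ)
    (Γ : Matrix (Fin m) (Fin m) ℝ) (hΓ : Γ.PosDef)
    (y : Fin m → ℝ)
    (u : ℝ → Fin J → (Fin d → ℝ))
    (ubar : ℝ → Fin d → ℝ)
    (hubar : ∀ t, ubar t = (J : ℝ)⁻¹ • ∑ k, u t k)
    (hu : ∀ t j, HasDerivAt (fun s => u s j)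
      ((J : ℝ)⁻¹ • ∑ k, (Γ⁻¹.mulVec (A.mulVec (u t k - ubar t)) ⬝ᵥ
          (y - A.mulVec (u t j))) • (u t k - ubar t)) t)
    (V : Submodule ℝ (Fin d → ℝ))
    (hV : V = Submodule.span ℝ (Set.range fun k => u 0 k - ubar 0)) :
    ∀ t : ℝ, 0 ≤ t → ∀ j, u t j - u 0 j ∈ V := by
  obtain ⟨W, hW⟩ := V.exists_isCompl
  set π : (Fin d → ℝ) →L[ℝ] W :=
    LinearMap.toContinuousLinearMap (W.linearProjOfIsCompl V hW.symm) with hπdef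
  have hπ0 : ∀ x : Fin d → ℝ, π x = 0 ↔ x ∈ V := by
    intro x
    rw [hπdef]
    exact Submodule.linearProjOfIsCompl_apply_eq_zero_iff (p := W) (q := V) hW.symm (x := x)
  set e : ℝ → Fin J → (Fin d → ℝ) := fun t k => u t k - ubar t with he
  set c : ℝ → Fin J → Fin J → ℝ := fun t j k =>
    Γ⁻¹.mulVec (A.mulVec (e t k)) ⬝ᵥ (y - A.mulVec (u t j)) with hc
  set B : ℝ → Fin J → Fin J → ℝ := fun t j k =>
    (J : ℝ)⁻¹ * c t j k - (J : ℝ)⁻¹ * ((J : ℝ)⁻¹ * ∑ l, c t l k) with hB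
  set q : ℝ → Fin J → W := fun t j => π (e t j) with hq
  -- derivatives
  have hu' : ∀ t j, HasDerivAt (fun s => u s j) ((J : ℝ)⁻¹ • ∑ k, c t j k • e t k) t :=
    fun t j => hu t j
  have hubar' : ∀ t, HasDerivAt ubar
      ((J : ℝ)⁻¹ • ∑ l, ((J : ℝ)⁻¹ • ∑ k, c t l k • e t k)) t := by
    intro t
    have h1 : ubar = fun s => (J : ℝ)⁻¹ • ∑ k, u s k := funext hubar
    rw [h1]
    exact (HasDerivAt.fun_sum fun l _ => hu' t l).fun_const_smul _
  have key : ∀ t j, (J : ℝ)⁻¹ • ∑ k, c t j k • e t k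
        - (J : ℝ)⁻¹ • ∑ l, ((J : ℝ)⁻¹ • ∑ k, c t l k • e t k)
      = ∑ k, B t j k • e t k := by
    intro t j
    exact eki_aux_key (c t) (e t) _ j
  have he' : ∀ t j, HasDerivAt (fun s => e s j) (∑ k, B t j k • e t k) t := by
    intro t j
    have := (hu' t j).sub (hubar' t)
    rwa [key t j] at this
  have hq' : ∀ t, HasDerivAt q (fun j => ∑ k, B t j k • q t k) t := by
    intro t
    rw [hasDerivAt_pi]
    intro j
    have h := π.hasFDerivAt.comp_hasDerivAt t (he' t j)
    simpa [map_sum, _root_.map_smul, hq, Function.comp_def] using h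
  -- continuity
  have hucont : ∀ j, Continuous fun t => u t j := by
    intro j
    exact continuous_iff_continuousAt.2 fun t => (hu t j).continuousAt
  have hubarcont : Continuous ubar := by
    have h1 : ubar = fun s => (J : ℝ)⁻¹ • ∑ k, u s k := funext hubar
    rw [h1]
    exact (continuous_finset_sum _ fun k _ => hucont k).fun_const_smul _
  have hecont : ∀ j, Continuous fun t => e t j := fun j => (hucont j).sub hubarcont
  have hccont : ∀ j k, Continuous fun t => c t j k := by
    intro j k
    exact (Continuous.matrix_mulVec continuous_const
        (Continuous.matrix_mulVec continuous_const (hecont k))).dotProduct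
      (continuous_const.sub (Continuous.matrix_mulVec continuous_const (hucont j)))
  have hBcont : ∀ j k, Continuous fun t => B t j k := by
    intro j k
    exact (continuous_const.mul (hccont j k)).sub
      (continuous_const.mul (continuous_const.mul
        (continuous_finset_sum _ fun l _ => hccont l k)))
  set M : ℝ → ℝ := fun t => ∑ j, ∑ k, |B t j k| with hM
  have hMcont : Continuous M :=
    continuous_finset_sum _ fun j _ => continuous_finset_sum _ fun k _ => (hBcont j k).abs
  have hqcont : Continuous q :=
    continuous_pi fun j => π.continuous.comp (hecont j)
  have hq0 : q 0 = 0 := by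
    funext j
    have : e 0 j ∈ V := by
      rw [hV]; exact Submodule.subset_span ⟨j, rfl⟩
    exact (hπ0 _).2 this
  -- the centered ensemble projection vanishes on [0, b]
  have qzero : ∀ b : ℝ, 0 ≤ b → ∀ s ∈ Set.Icc (0 : ℝ) b, q s = 0 := by
    intro b hb
    obtain ⟨C, hC⟩ := (isCompact_Icc (a := (0:ℝ)) (b := b)).exists_bound_of_continuousOn
      hMcont.continuousOn
    set K : ℝ := max C 0 with hK
    have hK0 : 0 ≤ K := le_max_right _ _
    have hMK : ∀ s ∈ Set.Icc (0 : ℝ) b, M s ≤ K := fun s hs =>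
      le_trans (le_abs_self _) (le_trans (hC s hs) (le_max_left _ _))
    have main := norm_le_gronwallBound_of_norm_deriv_right_le
      (f := q) (f' := fun s => fun j => ∑ k, B s j k • q s k)
      (δ := 0) (K := K) (ε := 0) (a := 0) (b := b)
      hqcont.continuousOn
      (fun x _ => (hq' x).hasDerivWithinAt)
      (by simp [hq0])
      ?_
    · intro s hs
      have := main s hs
      rw [gronwallBound_ε0_δ0] at this
      exact funext fun j => norm_le_zero_iff.1 (le_trans (norm_le_pi_norm _ j) this)
    · intro x hx
      rw [add_zero]
      have hxI : x ∈ Set.Icc (0 : ℝ) b := Set.Ico_subset_Icc_self hx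
      have hKq : 0 ≤ K * ‖q x‖ := mul_nonneg hK0 (norm_nonneg _)
      rw [pi_norm_le_iff_of_nonneg hKq]
      intro j
      calc ‖∑ k, B x j k • q x k‖ ≤ ∑ k, ‖B x j k • q x k‖ := norm_sum_le _ _
        _ = ∑ k, |B x j k| * ‖q x k‖ := by simp [norm_smul]
        _ ≤ ∑ k, |B x j k| * ‖q x‖ := Finset.sum_le_sum fun k _ =>
            mul_le_mul_of_nonneg_left (norm_le_pi_norm _ k) (abs_nonneg _)
        _ = (∑ k, |B x j k|) * ‖q x‖ := by rw [Finset.sum_mul]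
        _ ≤ M x * ‖q x‖ := by
            apply mul_le_mul_of_nonneg_right _ (norm_nonneg _)
            exact Finset.single_le_sum (f := fun j => ∑ k, |B x j k|)
              (fun i _ => Finset.sum_nonneg fun k _ => abs_nonneg _) (Finset.mem_univ j)
        _ ≤ K * ‖q x‖ := mul_le_mul_of_nonneg_right (hMK x hxI) (norm_nonneg _)
  -- conclusion
  intro t ht j
  set g : ℝ → W := fun s => π (u s j - u 0 j) with hg
  have hg' : ∀ s ∈ Set.Icc (0 : ℝ) t, HasDerivAt g 0 s := by
    intro s hs
    have h := π.hasFDerivAt.comp_hasDerivAt s ((hu' s j).sub_const (u 0 j))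
    have hz : π ((J : ℝ)⁻¹ • ∑ k, c s j k • e s k) = 0 := by
      rw [_root_.map_smul, map_sum]
      have : ∀ k : Fin J, π (c s j k • e s k) = 0 := by
        intro k
        rw [_root_.map_smul]
        have : π (e s k) = 0 := by
          have := congrFun (qzero t ht s hs) k
          simpa [hq] using this
        rw [this, smul_zero]
      simp [this]
    rw [hz] at h
    exact h
  have hgcont : Continuous g :=
    π.continuous.comp ((hucont j).sub continuous_const)
  have main := norm_le_gronwallBound_of_norm_deriv_right_le
    (f := g) (f' := fun _ => 0) (δ := 0) (K := 0) (ε := 0) (a := 0) (b := t)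
    hgcont.continuousOn
    (fun x hx => (hg' x (Set.Ico_subset_Icc_self hx)).hasDerivWithinAt)
    (by simp [hg])
    (by intro x hx; simp)
  have := main t (Set.right_mem_Icc.2 ht)
  rw [gronwallBound_ε0_δ0] at this
  have hgt : g t = 0 := norm_le_zero_iff.1 this
  exact (hπ0 _).1 hgt
end

section
/- The ensemble collapse quantity for linear deterministic EKI is monotone: along the flow du^{(j)}/dt = -C(u)A^TΓ^{-1}(Au^{(j)} - y), the quantity V(t) = (1/J)Σ_j ‖u^{(j)}(t) - ū(t)‖² satisfies dV/dt ≤ 0 whenever the deviations e^{(j)} = u^{(j)} - ū evolve by de^{(j)}/dt = -C(u)A^TΓ^{-1}A e^{(j)}. -/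
open Matrix Finset

private lemma dp_sum_left {n ι : Type*} [Fintype n] [Fintype ι] (f : ι → n → ℝ) (v : n → ℝ) :
    (∑ k, f k) ⬝ᵥ v = ∑ k, f k ⬝ᵥ v := by
  simp only [dotProduct, Finset.sum_apply, Finset.sum_mul]
  exact Finset.sum_comm

private lemma dp_sum_right {n ι : Type*} [Fintype n] [Fintype ι] (f : ι → n → ℝ) (v : n → ℝ) :
    v ⬝ᵥ (∑ k, f k) = ∑ k, v ⬝ᵥ f k := by
  simp only [dotProduct, Finset.sum_apply, Finset.mul_sum]
  exact Finset.sum_comm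

private lemma mv_sum_left {n p ι : Type*} [Fintype n] [Fintype p] [Fintype ι]
    (f : ι → Matrix n p ℝ) (v : p → ℝ) :
    (∑ k, f k) *ᵥ v = ∑ k, f k *ᵥ v := by
  funext i
  simp only [Matrix.mulVec, dotProduct, Matrix.sum_apply, Finset.sum_apply, Finset.sum_mul]
  exact Finset.sum_comm

private lemma vmv_mulVec {n p : Type*} [Fintype n] [Fintype p]
    (w : n → ℝ) (v : p → ℝ) (x : p → ℝ) :
    Matrix.vecMulVec w v *ᵥ x = (v ⬝ᵥ x) • w := by
  funext i
  simp only [Matrix.mulVec, dotProduct, Matrix.vecMulVec_apply, Pi.smul_apply,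
    smul_eq_mul, mul_assoc, ← Finset.mul_sum]
  ring

private lemma eki_key {d m J : ℕ}
    (A : Matrix (Fin m) (Fin d) ℝ) (B : Matrix (Fin m) (Fin m) ℝ)
    (hB : B.PosSemidef) (u : Fin J → Fin d → ℝ) :
    0 ≤ ∑ j, ∑ k, (u j ⬝ᵥ u k) * ((A *ᵥ u k) ⬝ᵥ B *ᵥ (A *ᵥ u j)) := by
  set g : Fin J → Fin m → ℝ := fun j => A *ᵥ u j with hg
  set Q : Fin J → Fin J → ℝ := fun k j => g k ⬝ᵥ B *ᵥ g j with hQ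
  have hrhs : ∀ i : Fin d, (∑ k, u k i • g k) ⬝ᵥ B *ᵥ (∑ j, u j i • g j)
      = ∑ k, ∑ j, u k i * (u j i * Q k j) := by
    intro i
    rw [dp_sum_left]
    refine Finset.sum_congr rfl fun k _ => ?_
    rw [smul_dotProduct, smul_eq_mul, Matrix.dotProduct_mulVec, dp_sum_right,
      Finset.mul_sum]
    refine Finset.sum_congr rfl fun j _ => ?_
    rw [dotProduct_smul, smul_eq_mul, ← Matrix.dotProduct_mulVec]
  have heq : ∑ j, ∑ k, (u j ⬝ᵥ u k) * Q k j
      = ∑ i : Fin d, (∑ k, u k i • g k) ⬝ᵥ B *ᵥ (∑ j, u j i • g j) := by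
    calc ∑ j, ∑ k, (u j ⬝ᵥ u k) * Q k j
        = ∑ j, ∑ k, ∑ i, u j i * u k i * Q k j := by
          refine Finset.sum_congr rfl fun j _ => Finset.sum_congr rfl fun k _ => ?_
          simp only [dotProduct, Finset.sum_mul]
      _ = ∑ j, ∑ i, ∑ k, u j i * u k i * Q k j :=
          Finset.sum_congr rfl fun j _ => Finset.sum_comm
      _ = ∑ i, ∑ j, ∑ k, u j i * u k i * Q k j := Finset.sum_comm
      _ = ∑ i, ∑ k, ∑ j, u k i * (u j i * Q k j) := by
          refine Finset.sum_congr rfl fun i _ => ?_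
          rw [Finset.sum_comm]
          exact Finset.sum_congr rfl fun k _ => Finset.sum_congr rfl fun j _ => by ring
      _ = ∑ i : Fin d, (∑ k, u k i • g k) ⬝ᵥ B *ᵥ (∑ j, u j i • g j) :=
          (Finset.sum_congr rfl fun i _ => (hrhs i).symm)
  rw [heq]
  refine Finset.sum_nonneg fun i _ => ?_
  simpa using hB.dotProduct_mulVec_nonneg (∑ j, u j i • g j)

/-- Ensemble collapse monotonicity for linear deterministic EKI: if the deviations
`e⁽ʲ⁾ = u⁽ʲ⁾ - ū` evolve by `de⁽ʲ⁾/dt = -C(u)AᵀΓ⁻¹A e⁽ʲ⁾` with `C(u)` the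
empirical covariance, the ensemble spread `V(t) = (1/J)Σ_j ‖e⁽ʲ⁾(t)‖²` is
non-increasing. -/
theorem eki_ensemble_collapse_monotone
    (d m J : ℕ) (hJ : 2 ≤ J)
    (A : Matrix (Fin m) (Fin d) ℝ)
    (Γ : Matrix (Fin m) (Fin m) ℝ) (hΓ : Γ.PosDef)
    (e : Fin J → ℝ → (Fin d → ℝ))
    (C : ℝ → Matrix (Fin d) (Fin d) ℝ)
    (hC : ∀ t, C t = ((J : ℝ) - 1)⁻¹ • ∑ k, Matrix.vecMulVec (e k t) (e k t))
    (he : ∀ t j, HasDerivAt (e j)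
      (-(C t).mulVec ((Aᵀ * Γ⁻¹ * A).mulVec (e j t))) t) :
    ∀ t : ℝ, deriv (fun s => (J : ℝ)⁻¹ * ∑ j, (e j s ⬝ᵥ e j s)) t ≤ 0 := by
  intro t
  set M : Matrix (Fin d) (Fin d) ℝ := Aᵀ * Γ⁻¹ * A with hM
  set f' : Fin J → Fin d → ℝ := fun j => -(C t).mulVec (M.mulVec (e j t)) with hf'
  have hd : HasDerivAt (fun s => (J : ℝ)⁻¹ * ∑ j, (e j s ⬝ᵥ e j s))
      ((J : ℝ)⁻¹ * ∑ j, 2 * (e j t ⬝ᵥ f' j)) t := by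
    refine HasDerivAt.const_mul _ ?_
    refine HasDerivAt.fun_sum (𝕜 := ℝ) (F := ℝ) fun j _ => ?_
    have hcomp : ∀ i, HasDerivAt (fun s => e j s i) (f' j i) t :=
      fun i => hasDerivAt_pi.mp (he t j) i
    have h2 : HasDerivAt (fun s => ∑ i, e j s i * e j s i)
        (∑ i, (f' j i * e j t i + e j t i * f' j i)) t :=
      HasDerivAt.fun_sum (𝕜 := ℝ) (F := ℝ) fun i _ => (hcomp i).mul (hcomp i)
    refine h2.congr_deriv ?_
    simp only [dotProduct, Finset.mul_sum]
    exact Finset.sum_congr rfl fun i _ => by ring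
  rw [hd.deriv]
  have hJ1 : (2:ℝ) ≤ (J:ℝ) := by exact_mod_cast hJ
  have hinv : (0:ℝ) ≤ ((J : ℝ) - 1)⁻¹ := by
    have : (0:ℝ) < (J:ℝ) - 1 := by linarith
    exact (inv_nonneg).2 this.le
  have hkey : 0 ≤ ∑ j, e j t ⬝ᵥ (C t).mulVec (M.mulVec (e j t)) := by
    have hexp : ∀ j : Fin J, e j t ⬝ᵥ (C t).mulVec (M.mulVec (e j t))
        = ((J : ℝ) - 1)⁻¹ * ∑ k, (e j t ⬝ᵥ e k t) *
            ((A *ᵥ e k t) ⬝ᵥ Γ⁻¹ *ᵥ (A *ᵥ e j t)) := by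
      intro j
      rw [hC t, Matrix.smul_mulVec, dotProduct_smul, smul_eq_mul]
      congr 1
      rw [mv_sum_left, dp_sum_right]
      refine Finset.sum_congr rfl fun k _ => ?_
      rw [vmv_mulVec, dotProduct_smul, smul_eq_mul, mul_comm]
      congr 1
      rw [hM, ← Matrix.mulVec_mulVec, ← Matrix.mulVec_mulVec,
        Matrix.dotProduct_mulVec (e k t) Aᵀ, Matrix.vecMul_transpose]
    simp only [hexp, ← Finset.mul_sum]
    exact mul_nonneg hinv (eki_key A Γ⁻¹ (hΓ.inv).posSemidef (fun j => e j t))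
  have hneg : ∑ j, 2 * (e j t ⬝ᵥ f' j)
      = -(2 * ∑ j, e j t ⬝ᵥ (C t).mulVec (M.mulVec (e j t))) := by
    rw [Finset.mul_sum, ← Finset.sum_neg_distrib]
    refine Finset.sum_congr rfl fun j _ => ?_
    rw [hf']
    simp only [dotProduct_neg]
    ring
  rw [hneg]
  have hJinv : (0:ℝ) ≤ (J:ℝ)⁻¹ := by positivity
  nlinarith [mul_nonneg hJinv hkey]
end

section
/- The iteratively regularized EKI update with inflation α_n ≥ 0 is a contraction toward the data in observation space in the linear setting: if G is linear and u_{n+1} = u_n + C^{up}(C^{pp} + α_nΓ)^{-1}(y - Gu_n) with exact covariances C^{up} = CG^T, C^{pp} = GCG^T for a fixed positive semidefinite C, then ‖Γ^{-1/2}(y - Gu_{n+1})‖ ≤ ‖Γ^{-1/2}(y - Gu_n)‖. -/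
open Matrix

/-- The iteratively regularized EKI update with inflation `α_n ≥ 0` is a
contraction toward the data in observation space in the linear setting: the
`Γ`-weighted residual norm `‖Γ^{-1/2}(y - Gu_n)‖` is non-increasing. -/
theorem regularized_eki_residual_contraction
    (d m : ℕ)
    (G : Matrix (Fin m) (Fin d) ℝ)
    (Γ : Matrix (Fin m) (Fin m) ℝ) (hΓ : Γ.PosDef)
    (C : Matrix (Fin d) (Fin d) ℝ) (hC : C.PosSemidef)
    (α : ℕ → ℝ) (hα : ∀ n, 0 ≤ α n)
    (y : Fin m → ℝ)
    (u : ℕ → (Fin d → ℝ))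
    (hupdate : ∀ n, u (n + 1) = u n +
      (C * Gᵀ).mulVec ((G * C * Gᵀ + α n • Γ)⁻¹.mulVec (y - G.mulVec (u n)))) :
    ∀ n, Real.sqrt ((y - G.mulVec (u (n + 1))) ⬝ᵥ Γ⁻¹.mulVec (y - G.mulVec (u (n + 1))))
      ≤ Real.sqrt ((y - G.mulVec (u n)) ⬝ᵥ Γ⁻¹.mulVec (y - G.mulVec (u n))) := by
  intro n
  set B : Matrix (Fin m) (Fin m) ℝ := G * C * Gᵀ with hBdef
  set M : Matrix (Fin m) (Fin m) ℝ := B + α n • Γ with hMdef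
  set r : Fin m → ℝ := y - G.mulVec (u n) with hrdef
  have hCT : Cᵀ = C := hC.1
  have hΓT : Γᵀ = Γ := hΓ.1
  have hBps : B.PosSemidef := by
    have h := hC.mul_mul_conjTranspose_same G
    rw [hBdef]
    simpa using h
  have hBT : Bᵀ = B := hBps.1
  -- residual recursion
  have hres : y - G.mulVec (u (n + 1)) = r - B.mulVec (M⁻¹.mulVec r) := by
    rw [hupdate n, Matrix.mulVec_add, Matrix.mulVec_mulVec, ← Matrix.mul_assoc]
    rw [hrdef]
    abel
  by_cases hMu : IsUnit M.det
  · -- invertible case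
    set s : Fin m → ℝ := M⁻¹.mulVec r with hsdef
    have hrs : r = M.mulVec s := by
      rw [hsdef, Matrix.mulVec_mulVec, Matrix.mul_nonsing_inv _ hMu, Matrix.one_mulVec]
    have hres2 : y - G.mulVec (u (n + 1)) = α n • Γ.mulVec s := by
      rw [hres, hrs, hMdef, Matrix.add_mulVec, Matrix.smul_mulVec]
      abel
    have hΓu : IsUnit Γ.det := hΓ.det_pos.ne'.isUnit
    set b : Fin m → ℝ := B.mulVec s with hbdef
    set t : Fin m → ℝ := Γ.mulVec s with htdef
    have hinvt : Γ⁻¹.mulVec t = s := by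
      rw [htdef, Matrix.mulVec_mulVec, Matrix.nonsing_inv_mul _ hΓu, Matrix.one_mulVec]
    -- lhs quadratic form
    have hlhs : (y - G.mulVec (u (n + 1))) ⬝ᵥ Γ⁻¹.mulVec (y - G.mulVec (u (n + 1)))
        = (α n)^2 * (t ⬝ᵥ s) := by
      rw [hres2, Matrix.mulVec_smul, hinvt, dotProduct_smul, smul_dotProduct]
      ring_nf
    -- rhs quadratic form
    have hMs : M.mulVec s = b + α n • t := by
      rw [hMdef, Matrix.add_mulVec, Matrix.smul_mulVec]
    have hcross : t ⬝ᵥ Γ⁻¹.mulVec b = s ⬝ᵥ b := by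
      rw [htdef, Matrix.dotProduct_mulVec (Γ.mulVec s)]
      rw [show Γ *ᵥ s = s ᵥ* Γ by conv_lhs => rw [← hΓT, Matrix.mulVec_transpose]]
      rw [Matrix.vecMul_vecMul, Matrix.mul_nonsing_inv _ hΓu, Matrix.vecMul_one]
    have hrhs : r ⬝ᵥ Γ⁻¹.mulVec r
        = b ⬝ᵥ Γ⁻¹.mulVec b + 2 * α n * (s ⬝ᵥ b) + (α n)^2 * (t ⬝ᵥ s) := by
      rw [hrs, hMs, Matrix.mulVec_add, Matrix.mulVec_smul, hinvt]
      rw [add_dotProduct, smul_dotProduct, dotProduct_add, dotProduct_add,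
        dotProduct_smul, dotProduct_smul, hcross]
      have hbs : b ⬝ᵥ s = s ⬝ᵥ b := dotProduct_comm _ _
      have hts : t ⬝ᵥ s = s ⬝ᵥ t := dotProduct_comm _ _
      simp only [smul_eq_mul, hbs, hts]
      ring
    -- nonnegativity
    have h1 : 0 ≤ b ⬝ᵥ Γ⁻¹.mulVec b := by
      have := hΓ.inv.posSemidef.dotProduct_mulVec_nonneg b
      simpa using this
    have h2 : 0 ≤ s ⬝ᵥ b := by
      have := hBps.dotProduct_mulVec_nonneg s
      simpa [hbdef] using this
    apply Real.sqrt_le_sqrt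
    rw [hlhs, hrhs]
    nlinarith [hα n, sq_nonneg (α n)]
  · -- M singular: inverse is zero, update trivial
    have hM0 : M⁻¹ = 0 := Matrix.nonsing_inv_apply_not_isUnit _ hMu
    rw [hres, hM0]
    simp
end
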